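/- Let X be a topological space and let P₁ and P₂ be two partitions of X into subsets each of which is locally connected in its subspace topology. Let P₁ᶜ and P₂ᶜ denote the partitions of X obtained by replacing each member by its connected components. Then P₁ᶜ = P₂ᶜ if and only if every x ∈ X admits an open neighbourhood U in X such that P₁(x) ∩ U = P₂(x) ∩ U, where Pᵢ(x) denotes the member of Pᵢ containing x. -/

import Mathlib

/-!
If `P₁` and `P₂` agree locally, then for `T ∈ P₁` and `S ∈ P₂` the set `T ∩ S` is relatively
clopen in `T`, so it contains the component in `T` of each of its points; by symmetry the
components of `x` in `T` and in `S` coincide. Conversely, in a locally connected member the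
component of `x` is relatively open, so a common component is `T ∩ V = S ∩ W` with `V`, `W`
open, and `U = V ∩ W` cuts both members down to it.
-/

open Set Topology

namespace Setoid.IsPartition

variable {α : Type*} {c : Set (Set α)}

theorem exists_mem (hc : IsPartition c) (a : α) : ∃ s ∈ c, a ∈ s :=
  (hc.2 a).exists

theorem eq_of_mem_of_mem (hc : IsPartition c) {s t : Set α} (hs : s ∈ c) (ht : t ∈ c) {a : α}
    (has : a ∈ s) (hat : a ∈ t) : s = t :=
  (hc.2 a).unique ⟨hs, has⟩ ⟨ht, hat⟩

end Setoid.IsPartition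

theorem inter_inter_eq_of_inter_eq {α : Type*} {A B V W : Set α} (h : A ∩ V = B ∩ W) :
    A ∩ (V ∩ W) = B ∩ (V ∩ W) := by
  ext y
  have := congrArg (y ∈ ·) h
  simp only [mem_inter_iff, eq_iff_iff] at this ⊢
  tauto

section

variable {X : Type*} [TopologicalSpace X]

theorem exists_isOpen_connectedComponentIn_eq_inter {T : Set X} [LocallyConnectedSpace T] {x : X}
    (hx : x ∈ T) : ∃ V : Set X, IsOpen V ∧ connectedComponentIn T x = T ∩ V := by
  obtain ⟨V, hV, hVcomp⟩ :=
    isOpen_induced_iff.mp (isOpen_connectedComponent (x := (⟨x, hx⟩ : T)))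
  refine ⟨V, hV, ?_⟩
  rw [connectedComponentIn_eq_image hx, ← hVcomp, Subtype.image_preimage_coe]

/-- Written `Pᶜ` in the informal statement. -/
def componentPartition (P : Set (Set X)) : Set (Set X) :=
  {C | ∃ T ∈ P, ∃ x ∈ T, C = connectedComponentIn T x}

def LocallyAgree (P Q : Set (Set X)) : Prop :=
  ∀ x : X, ∃ U : Set X, IsOpen U ∧ x ∈ U ∧ ∀ T ∈ P, ∀ S ∈ Q, x ∈ T → x ∈ S → T ∩ U = S ∩ U

variable {P Q : Set (Set X)}

theorem componentPartition_eq_iff (hP : Setoid.IsPartition P) (hQ : Setoid.IsPartition Q) :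
    componentPartition P = componentPartition Q ↔
      ∀ T ∈ P, ∀ S ∈ Q, ∀ x ∈ T, x ∈ S → connectedComponentIn T x = connectedComponentIn S x := by
  constructor
  · intro h T hT S hS x hxT hxS
    have hmem : connectedComponentIn T x ∈ componentPartition Q := h ▸ ⟨T, hT, x, hxT, rfl⟩
    obtain ⟨S', hS', y, -, hTS'⟩ := hmem
    have hxS' : x ∈ connectedComponentIn S' y := hTS' ▸ mem_connectedComponentIn hxT
    obtain rfl : S' = S := hQ.eq_of_mem_of_mem hS' hS (connectedComponentIn_subset _ _ hxS') hxS
    rw [hTS', connectedComponentIn_eq hxS']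
  · intro h
    ext C
    constructor
    · rintro ⟨T, hT, x, hxT, rfl⟩
      obtain ⟨S, hS, hxS⟩ := hQ.exists_mem x
      exact ⟨S, hS, x, hxS, h T hT S hS x hxT hxS⟩
    · rintro ⟨S, hS, x, hxS, rfl⟩
      obtain ⟨T, hT, hxT⟩ := hP.exists_mem x
      exact ⟨T, hT, x, hxT, (h T hT S hS x hxT hxS).symm⟩

theorem LocallyAgree.symm (h : LocallyAgree P Q) : LocallyAgree Q P := fun x ↦ by
  obtain ⟨U, hU, hxU, hagree⟩ := h x
  exact ⟨U, hU, hxU, fun S hS T hT hxS hxT ↦ (hagree T hT S hS hxT hxS).symm⟩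

theorem LocallyAgree.eventually_mem_iff (hQ : Setoid.IsPartition Q) (h : LocallyAgree P Q)
    {T S : Set X} (hT : T ∈ P) (hS : S ∈ Q) {y : X} (hyT : y ∈ T) :
    ∀ᶠ z in 𝓝[T] y, (z ∈ S ↔ y ∈ S) := by
  obtain ⟨U, hU, hyU, hagree⟩ := h y
  obtain ⟨Sy, hSy, hySy⟩ := hQ.exists_mem y
  filter_upwards [inter_mem_nhdsWithin T (hU.mem_nhds hyU)] with z hz
  have hzSy : z ∈ Sy := (hagree T hT Sy hSy hyT hySy ▸ hz).1
  constructor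
  · intro hzS
    exact hQ.eq_of_mem_of_mem hSy hS hzSy hzS ▸ hySy
  · intro hyS
    exact hQ.eq_of_mem_of_mem hSy hS hySy hyS ▸ hzSy

theorem LocallyAgree.connectedComponentIn_subset (hQ : Setoid.IsPartition Q)
    (h : LocallyAgree P Q) {T S : Set X} (hT : T ∈ P) (hS : S ∈ Q) {x : X} (hxT : x ∈ T)
    (hxS : x ∈ S) : connectedComponentIn T x ⊆ S := by
  have hCT : connectedComponentIn T x ⊆ T := _root_.connectedComponentIn_subset T x
  intro z hz
  refine (isPreconnected_connectedComponentIn.induction₂ (fun y z ↦ y ∈ S ↔ z ∈ S) ?_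
    (fun _ _ _ _ _ _ ↦ Iff.trans) (fun _ _ _ _ ↦ Iff.symm) (mem_connectedComponentIn hxT) hz).mp hxS
  intro y hy
  filter_upwards [nhdsWithin_mono y hCT (h.eventually_mem_iff hQ hT hS (hCT hy))] with z hz
  exact hz.symm

theorem LocallyAgree.connectedComponentIn_eq (hP : Setoid.IsPartition P)
    (hQ : Setoid.IsPartition Q) (h : LocallyAgree P Q) {T S : Set X} (hT : T ∈ P) (hS : S ∈ Q)
    {x : X} (hxT : x ∈ T) (hxS : x ∈ S) : connectedComponentIn T x = connectedComponentIn S x :=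
  Subset.antisymm
    (isPreconnected_connectedComponentIn.subset_connectedComponentIn (mem_connectedComponentIn hxT)
      (h.connectedComponentIn_subset hQ hT hS hxT hxS))
    (isPreconnected_connectedComponentIn.subset_connectedComponentIn (mem_connectedComponentIn hxS)
      (h.symm.connectedComponentIn_subset hP hS hT hxS hxT))

theorem locallyAgree_of_connectedComponentIn_eq (hP : Setoid.IsPartition P)
    (hQ : Setoid.IsPartition Q) (hlcP : ∀ T ∈ P, LocallyConnectedSpace T)
    (hlcQ : ∀ S ∈ Q, LocallyConnectedSpace S)
    (h : ∀ T ∈ P, ∀ S ∈ Q, ∀ x ∈ T, x ∈ S → connectedComponentIn T x = connectedComponentIn S x) :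
    LocallyAgree P Q := by
  intro x
  obtain ⟨T, hT, hxT⟩ := hP.exists_mem x
  obtain ⟨S, hS, hxS⟩ := hQ.exists_mem x
  have := hlcP T hT
  have := hlcQ S hS
  obtain ⟨V, hV, hTV⟩ := exists_isOpen_connectedComponentIn_eq_inter hxT
  obtain ⟨W, hW, hSW⟩ := exists_isOpen_connectedComponentIn_eq_inter hxS
  have hxV : x ∈ V := (hTV ▸ mem_connectedComponentIn hxT).2
  have hxW : x ∈ W := (hSW ▸ mem_connectedComponentIn hxS).2
  refine ⟨V ∩ W, hV.inter hW, ⟨hxV, hxW⟩, fun T' hT' S' hS' hxT' hxS' ↦ ?_⟩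
  obtain rfl := hP.eq_of_mem_of_mem hT' hT hxT' hxT
  obtain rfl := hQ.eq_of_mem_of_mem hS' hS hxS' hxS
  exact inter_inter_eq_of_inter_eq (hTV.symm.trans ((h T' hT' S' hS' x hxT hxS).trans hSW))

end

/-- Two partitions of a space into locally connected pieces induce the same partition into
connected components iff they agree locally: around every point `x` there is an open `U` on
which the members through `x` coincide. -/
theorem stmt15 {X : Type*} [TopologicalSpace X] (P₁ P₂ : Set (Set X))
    (h₁ : Setoid.IsPartition P₁) (h₂ : Setoid.IsPartition P₂)
    (hlc₁ : ∀ T ∈ P₁, LocallyConnectedSpace T)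
    (hlc₂ : ∀ T ∈ P₂, LocallyConnectedSpace T) :
    ({C : Set X | ∃ T ∈ P₁, ∃ x ∈ T, C = connectedComponentIn T x}
        = {C : Set X | ∃ T ∈ P₂, ∃ x ∈ T, C = connectedComponentIn T x})
      ↔ ∀ x : X, ∃ U : Set X, IsOpen U ∧ x ∈ U ∧
          ∀ T₁ ∈ P₁, ∀ T₂ ∈ P₂, x ∈ T₁ → x ∈ T₂ → T₁ ∩ U = T₂ ∩ U := by
  change componentPartition P₁ = componentPartition P₂ ↔ LocallyAgree P₁ P₂
  rw [componentPartition_eq_iff h₁ h₂]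
  exact ⟨locallyAgree_of_connectedComponentIn_eq h₁ h₂ hlc₁ hlc₂,
    fun h T hT S hS _ hxT hxS ↦ h.connectedComponentIn_eq h₁ h₂ hT hS hxT hxS⟩
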